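/- arXiv:2201.10939 — 2 statements merged into one kernel-verified Lean document; each statement's English description precedes it below -/
import Mathlib

section
/- Let S, T be positive invertible bounded operators on complex Hilbert spaces H, K respectively. Then the spectrum of S ⊗ T on H ⊗ K is the closure of { st : s ∈ Sp(S), t ∈ Sp(T) }. -/
open scoped InnerProductSpace TensorProduct
set_option linter.unusedSectionVars false

namespace SpectrumTensorAux

variable {H K W : Type*}
    [NormedAddCommGroup H] [InnerProductSpace ℂ H] [CompleteSpace H]
    [NormedAddCommGroup K] [InnerProductSpace ℂ K] [CompleteSpace K]
    [NormedAddCommGroup W] [InnerProductSpace ℂ W] [CompleteSpace W]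

lemma tensor_norm (tmul : H →ₗ[ℂ] K →ₗ[ℂ] W)
    (hinner : ∀ (h h' : H) (k k' : K),
      (inner ℂ (tmul h k) (tmul h' k') : ℂ) = (inner ℂ h h' : ℂ) * (inner ℂ k k' : ℂ))
    (h : H) (k : K) : ‖tmul h k‖ = ‖h‖ * ‖k‖ := by
  have h0 := inner_self_eq_norm_sq_to_K (𝕜 := ℂ) (tmul h k)
  rw [hinner, inner_self_eq_norm_sq_to_K, inner_self_eq_norm_sq_to_K] at h0
  have h2 : ‖h‖ ^ 2 * ‖k‖ ^ 2 = ‖tmul h k‖ ^ 2 := by exact_mod_cast h0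
  nlinarith [norm_nonneg (tmul h k), mul_nonneg (norm_nonneg h) (norm_nonneg k)]

lemma orth_sum (tmul : H →ₗ[ℂ] K →ₗ[ℂ] W)
    (hinner : ∀ (h h' : H) (k k' : K),
      (inner ℂ (tmul h k) (tmul h' k') : ℂ) = (inner ℂ h h' : ℂ) * (inner ℂ k k' : ℂ))
    {n : ℕ} {e : Fin n → K} (he : Orthonormal ℂ e) (u : Fin n → H) :
    ‖∑ i, tmul (u i) (e i)‖ ^ 2 = ∑ i, ‖u i‖ ^ 2 := by
  classical
  have h0 := inner_self_eq_norm_sq_to_K (𝕜 := ℂ) (∑ i, tmul (u i) (e i))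
  have h1 : (inner ℂ (∑ i, tmul (u i) (e i)) (∑ i, tmul (u i) (e i)) : ℂ)
      = ∑ i, (inner ℂ (u i) (u i) : ℂ) := by
    rw [sum_inner]
    refine Finset.sum_congr rfl fun i _ => ?_
    rw [inner_sum]
    have heq : ∀ j, (inner ℂ (tmul (u i) (e i)) (tmul (u j) (e j)) : ℂ)
        = if i = j then (inner ℂ (u i) (u j) : ℂ) else 0 := by
      intro j
      rw [hinner, orthonormal_iff_ite.mp he]
      split <;> simp
    rw [Finset.sum_congr rfl fun j _ => heq j]
    simp
  rw [h1] at h0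
  have h2 : (∑ i, (inner ℂ (u i) (u i) : ℂ)) = ∑ i, ((‖u i‖ : ℂ)) ^ 2 := by
    exact Finset.sum_congr rfl fun i _ => inner_self_eq_norm_sq_to_K (𝕜 := ℂ) (u i)
  rw [h2] at h0
  norm_cast at h0
  exact Complex.ofReal_inj.mp h0.symm


lemma decomp (z : H ⊗[ℂ] K) : ∃ (n : ℕ) (u : Fin n → H) (e : Fin n → K),
    Orthonormal ℂ e ∧ z = ∑ i, u i ⊗ₜ[ℂ] e i := by
  classical
  obtain ⟨s, rfl⟩ := TensorProduct.exists_finset z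
  set E := Submodule.span ℂ (Prod.snd '' (s : Set (H × K))) with hE
  haveI : FiniteDimensional ℂ E :=
    FiniteDimensional.span_of_finite ℂ (s.finite_toSet.image _)
  set b := stdOrthonormalBasis ℂ E with hb
  refine ⟨Module.finrank ℂ E, fun i => ∑ p ∈ s, (inner ℂ ((b i : K)) p.2 : ℂ) • p.1,
    fun i => (b i : K), ?_, ?_⟩
  · rw [orthonormal_iff_ite]
    intro i j
    have h := orthonormal_iff_ite.mp b.orthonormal i j
    rwa [Submodule.coe_inner] at h
  · have key : ∀ p ∈ s, (p.2 : K) = ∑ i, (inner ℂ ((b i : K)) p.2 : ℂ) • ((b i : K)) := by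
      intro p hp
      have hpE : p.2 ∈ E := Submodule.subset_span ⟨p, hp, rfl⟩
      have h2 := congrArg (E.subtype) (b.sum_repr ⟨p.2, hpE⟩)
      simp only [map_sum, map_smul, OrthonormalBasis.repr_apply_apply,
        Submodule.coe_inner, Submodule.subtype_apply] at h2
      exact h2.symm
    calc ∑ p ∈ s, p.1 ⊗ₜ[ℂ] p.2
        = ∑ p ∈ s, ∑ i, (inner ℂ ((b i : K)) p.2 : ℂ) • (p.1 ⊗ₜ[ℂ] (b i : K)) := by
          refine Finset.sum_congr rfl fun p hp => ?_
          conv_lhs => rw [key p hp]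
          rw [TensorProduct.tmul_sum]
          exact Finset.sum_congr rfl fun i _ => by rw [TensorProduct.tmul_smul]
      _ = ∑ i, (∑ p ∈ s, (inner ℂ ((b i : K)) p.2 : ℂ) • p.1) ⊗ₜ[ℂ] ((b i : K)) := by
          rw [Finset.sum_comm]
          refine Finset.sum_congr rfl fun i _ => ?_
          rw [TensorProduct.sum_tmul]
          exact Finset.sum_congr rfl fun p _ => by rw [TensorProduct.smul_tmul']

lemma ext_bound (tmul : H →ₗ[ℂ] K →ₗ[ℂ] W)
    (hinner : ∀ (h h' : H) (k k' : K),
      (inner ℂ (tmul h k) (tmul h' k') : ℂ) = (inner ℂ h h' : ℂ) * (inner ℂ k k' : ℂ))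
    (A : H →L[ℂ] H) (z : H ⊗[ℂ] K) :
    ‖TensorProduct.lift tmul ((TensorProduct.map (A : H →ₗ[ℂ] H) LinearMap.id) z)‖
      ≤ ‖A‖ * ‖TensorProduct.lift tmul z‖ := by
  obtain ⟨n, u, e, he, rfl⟩ := decomp z
  have h1 : TensorProduct.lift tmul (∑ i, u i ⊗ₜ[ℂ] e i) = ∑ i, tmul (u i) (e i) := by
    simp
  have h2 : TensorProduct.lift tmul ((TensorProduct.map (A : H →ₗ[ℂ] H) LinearMap.id)
      (∑ i, u i ⊗ₜ[ℂ] e i)) = ∑ i, tmul (A (u i)) (e i) := by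
    simp
  rw [h1, h2]
  have e1 := orth_sum tmul hinner he u
  have e2 := orth_sum tmul hinner he (fun i => A (u i))
  have hA : ∀ i, ‖A (u i)‖ ^ 2 ≤ ‖A‖ ^ 2 * ‖u i‖ ^ 2 := fun i => by
    have h := A.le_opNorm (u i)
    nlinarith [norm_nonneg (A (u i)), norm_nonneg (u i), norm_nonneg A]
  have hsq : ‖∑ i, tmul (A (u i)) (e i)‖ ^ 2 ≤ (‖A‖ * ‖∑ i, tmul (u i) (e i)‖) ^ 2 := by
    rw [e2, mul_pow, e1, Finset.mul_sum]
    exact Finset.sum_le_sum fun i _ => hA i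
  nlinarith [norm_nonneg (∑ i, tmul (A (u i)) (e i)),
    mul_nonneg (norm_nonneg A) (norm_nonneg (∑ i, tmul (u i) (e i)))]


lemma ext_unique (tmul : H →ₗ[ℂ] K →ₗ[ℂ] W)
    (hdense : Dense (Submodule.span ℂ (Set.range fun p : H × K => tmul p.1 p.2) : Set W))
    {B C : W →L[ℂ] W} (hBC : ∀ h k, B (tmul h k) = C (tmul h k)) : B = C := by
  have heq : Set.EqOn B C
      (Submodule.span ℂ (Set.range fun p : H × K => tmul p.1 p.2) : Set W) := by
    intro x hx
    induction hx using Submodule.span_induction with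
    | mem x hx => obtain ⟨p, rfl⟩ := hx; exact hBC p.1 p.2
    | zero => simp
    | add x y _ _ hx hy => simp only [map_add, hx, hy]
    | smul c x _ hx => simp only [map_smul, hx]
  have := Continuous.ext_on hdense B.continuous C.continuous heq
  exact ContinuousLinearMap.ext fun x => congrFun this x

lemma ext_exists (tmul : H →ₗ[ℂ] K →ₗ[ℂ] W)
    (hinner : ∀ (h h' : H) (k k' : K),
      (inner ℂ (tmul h k) (tmul h' k') : ℂ) = (inner ℂ h h' : ℂ) * (inner ℂ k k' : ℂ))
    (hdense : Dense (Submodule.span ℂ (Set.range fun p : H × K => tmul p.1 p.2) : Set W))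
    (A : H →L[ℂ] H) :
    ∃ A' : W →L[ℂ] W, ∀ h k, A' (tmul h k) = tmul (A h) k := by
  classical
  set ρ : H ⊗[ℂ] K →ₗ[ℂ] W := TensorProduct.lift tmul with hρ
  set g : H ⊗[ℂ] K →ₗ[ℂ] W :=
    ρ.comp (TensorProduct.map (A : H →ₗ[ℂ] H) LinearMap.id) with hg
  have hbound : ∀ z, ‖g z‖ ≤ ‖A‖ * ‖ρ z‖ := fun z => ext_bound tmul hinner A z
  have hker : LinearMap.ker ρ ≤ LinearMap.ker g := by
    intro z hz
    rw [LinearMap.mem_ker] at hz ⊢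
    have hb := hbound z
    rw [hz, norm_zero, mul_zero] at hb
    exact norm_le_zero_iff.mp hb
  have hDspan : LinearMap.range ρ
      = Submodule.span ℂ (Set.range fun p : H × K => tmul p.1 p.2) := by
    apply le_antisymm
    · rintro x ⟨z, rfl⟩
      induction z using TensorProduct.induction_on with
      | zero => simpa using Submodule.zero_mem _
      | tmul h k => exact Submodule.subset_span ⟨(h, k), by simp [hρ]⟩
      | add a b ha hb => rw [map_add]; exact Submodule.add_mem _ ha hb
    · rw [Submodule.span_le]
      rintro x ⟨p, rfl⟩
      exact ⟨p.1 ⊗ₜ[ℂ] p.2, by simp [hρ]⟩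
  have hdenseD : Dense ((LinearMap.range ρ : Submodule ℂ W) : Set W) := by
    rw [hDspan]; exact hdense
  set q := LinearMap.quotKerEquivRange ρ with hq
  set f₀ : (LinearMap.range ρ : Submodule ℂ W) →ₗ[ℂ] W :=
    ((LinearMap.ker ρ).liftQ g hker).comp q.symm.toLinearMap with hf₀def
  have hf₀ : ∀ z : H ⊗[ℂ] K, f₀ ⟨ρ z, LinearMap.mem_range_self ρ z⟩ = g z := by
    intro z
    have h1 : q (Submodule.Quotient.mk z) = ⟨ρ z, LinearMap.mem_range_self ρ z⟩ :=
      Subtype.ext (LinearMap.quotKerEquivRange_apply_mk ρ z)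
    have h2 : q.symm ⟨ρ z, LinearMap.mem_range_self ρ z⟩ = Submodule.Quotient.mk z := by
      rw [← h1, LinearEquiv.symm_apply_apply]
    rw [hf₀def, LinearMap.comp_apply, LinearEquiv.coe_toLinearMap, h2,
      Submodule.liftQ_apply]
  have hf₀b : ∀ x : (LinearMap.range ρ : Submodule ℂ W), ‖f₀ x‖ ≤ ‖A‖ * ‖x‖ := by
    rintro ⟨x, hx⟩
    obtain ⟨z, rfl⟩ := hx
    calc ‖f₀ ⟨ρ z, LinearMap.mem_range_self ρ z⟩‖ = ‖g z‖ := by rw [hf₀]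
      _ ≤ ‖A‖ * ‖ρ z‖ := hbound z
  set f : (LinearMap.range ρ : Submodule ℂ W) →L[ℂ] W :=
    f₀.mkContinuous ‖A‖ hf₀b with hf
  have hdr : DenseRange ((LinearMap.range ρ : Submodule ℂ W).subtypeL) := by
    have : Set.range ((LinearMap.range ρ : Submodule ℂ W).subtypeL)
        = ((LinearMap.range ρ : Submodule ℂ W) : Set W) := Subtype.range_coe
    rw [DenseRange, this]; exact hdenseD
  have hui : IsUniformInducing ((LinearMap.range ρ : Submodule ℂ W).subtypeL) :=
    isometry_subtype_coe.isUniformInducing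
  refine ⟨f.extend (LinearMap.range ρ : Submodule ℂ W).subtypeL, fun h k => ?_⟩
  have hmem : tmul h k ∈ LinearMap.range ρ := ⟨h ⊗ₜ[ℂ] k, by simp [hρ]⟩
  have h3 := ContinuousLinearMap.extend_eq f
    (e := (LinearMap.range ρ : Submodule ℂ W).subtypeL) hdr hui ⟨tmul h k, hmem⟩
  have h4 : ((LinearMap.range ρ : Submodule ℂ W).subtypeL) ⟨tmul h k, hmem⟩ = tmul h k := rfl
  rw [h4] at h3
  rw [h3, hf]
  have h5 : (⟨tmul h k, hmem⟩ : (LinearMap.range ρ : Submodule ℂ W))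
      = ⟨ρ (h ⊗ₜ[ℂ] k), LinearMap.mem_range_self ρ (h ⊗ₜ[ℂ] k)⟩ := by
    apply Subtype.ext; simp [hρ]
  calc f₀.mkContinuous ‖A‖ hf₀b ⟨tmul h k, hmem⟩
      = f₀ ⟨tmul h k, hmem⟩ := rfl
    _ = f₀ ⟨ρ (h ⊗ₜ[ℂ] k), LinearMap.mem_range_self ρ (h ⊗ₜ[ℂ] k)⟩ := by rw [h5]
    _ = g (h ⊗ₜ[ℂ] k) := hf₀ _
    _ = tmul (A h) k := by simp [hg, hρ]

lemma ext_inner_all (tmul : H →ₗ[ℂ] K →ₗ[ℂ] W)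
    (hdense : Dense (Submodule.span ℂ (Set.range fun p : H × K => tmul p.1 p.2) : Set W))
    {B C : W →L[ℂ] W}
    (h : ∀ (h h' : H) (k k' : K),
      (inner ℂ (B (tmul h k)) (tmul h' k') : ℂ) = inner ℂ (tmul h k) (C (tmul h' k'))) :
    ∀ x y : W, (inner ℂ (B x) y : ℂ) = inner ℂ x (C y) := by
  set s : Set W := (Submodule.span ℂ (Set.range fun p : H × K => tmul p.1 p.2) : Set W)
    with hs
  have step1 : ∀ y ∈ Submodule.span ℂ (Set.range fun p : H × K => tmul p.1 p.2),
      ∀ x ∈ Submodule.span ℂ (Set.range fun p : H × K => tmul p.1 p.2),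
      (inner ℂ (B x) y : ℂ) = inner ℂ x (C y) := by
    intro y hy
    induction hy using Submodule.span_induction with
    | mem y hy =>
      intro x hx
      induction hx using Submodule.span_induction with
      | mem x hx =>
        obtain ⟨p, rfl⟩ := hx; obtain ⟨p', rfl⟩ := hy
        exact h p.1 p'.1 p.2 p'.2
      | zero => simp
      | add a b _ _ ha hb => simp only [map_add, inner_add_left, ha, hb]
      | smul c a _ ha => simp only [map_smul, inner_smul_left, ha]
    | zero => intro x _; simp
    | add a b _ _ ha hb =>
      intro x hx
      simp only [map_add, inner_add_right, ha x hx, hb x hx]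
    | smul c a _ ha =>
      intro x hx
      simp only [map_smul, inner_smul_right, ha x hx]
  have step2 : ∀ y ∈ Submodule.span ℂ (Set.range fun p : H × K => tmul p.1 p.2),
      ∀ x, (inner ℂ (B x) y : ℂ) = inner ℂ x (C y) := by
    intro y hy
    have hc1 : Continuous fun x : W => (inner ℂ (B x) y : ℂ) :=
      Continuous.inner (B.continuous) continuous_const
    have hc2 : Continuous fun x : W => (inner ℂ x (C y) : ℂ) :=
      Continuous.inner continuous_id continuous_const
    have := Continuous.ext_on hdense hc1 hc2 (fun x hx => step1 y hy x hx)
    exact fun x => congrFun this x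
  intro x y
  have hc1 : Continuous fun y : W => (inner ℂ (B x) y : ℂ) :=
    Continuous.inner continuous_const continuous_id
  have hc2 : Continuous fun y : W => (inner ℂ x (C y) : ℂ) :=
    Continuous.inner continuous_const (C.continuous)
  have := Continuous.ext_on hdense hc1 hc2 (fun y hy => step2 y hy x)
  exact congrFun this y


lemma arith_contra {c M ε : ℝ} (hc : 0 ≤ c) (hM : 0 < M) (hε : 0 < ε)
    (hεeq : ε * ((c + 1) * (M + 1)) = 1) (hfinal : 1 ≤ c * (ε * M)) : False := by
  nlinarith [mul_pos hε hM, mul_nonneg hε.le hc]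

lemma approx_eigen {E : Type*} [NormedAddCommGroup E] [InnerProductSpace ℂ E]
    [CompleteSpace E] (S : E →L[ℂ] E) (hS : IsSelfAdjoint S) {r : ℝ}
    (hr : (r : ℂ) ∈ spectrum ℂ S) {ε : ℝ} (hε : 0 < ε) :
    ∃ h : E, ‖h‖ = 1 ∧ ‖S h - (r : ℂ) • h‖ < ε := by
  by_contra hcon
  push_neg at hcon
  set A : E →L[ℂ] E := S - (r : ℂ) • 1 with hA
  have hAapp : ∀ x : E, A x = S x - (r : ℂ) • x := by
    intro x; simp [hA]
  have hone : IsSelfAdjoint ((r : ℂ) • (1 : E →L[ℂ] E)) :=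
    IsSelfAdjoint.smul (by exact Complex.conj_ofReal r) (IsSelfAdjoint.one _)
  have hAsa : IsSelfAdjoint A := hA ▸ hS.sub hone
  have hAadj : ContinuousLinearMap.adjoint A = A := hAsa.adjoint_eq
  have hAb : ∀ x : E, ε * ‖x‖ ≤ ‖A x‖ := by
    intro x
    rcases eq_or_ne x 0 with rfl | hx
    · simp
    · have hn : ‖x‖ ≠ 0 := norm_ne_zero_iff.mpr hx
      have hnpos : (0:ℝ) < ‖x‖ := norm_pos_iff.mpr hx
      have h1 := hcon (((‖x‖⁻¹ : ℝ) : ℂ) • x) (by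
        rw [norm_smul]
        simp [abs_of_nonneg (le_of_lt (inv_pos.mpr hnpos)), inv_mul_cancel₀ hn])
      have h2 : S (((‖x‖⁻¹ : ℝ) : ℂ) • x) - (r : ℂ) • (((‖x‖⁻¹ : ℝ) : ℂ) • x)
          = ((((‖x‖⁻¹ : ℝ)) : ℂ)) • (S x - (r : ℂ) • x) := by
        rw [map_smul, smul_sub, smul_comm]
      rw [h2, norm_smul] at h1
      have h3 : ε ≤ ‖x‖⁻¹ * ‖S x - (r : ℂ) • x‖ := by
        simpa [abs_of_nonneg (le_of_lt (inv_pos.mpr hnpos))] using h1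
      rw [hAapp]
      calc ε * ‖x‖ ≤ (‖x‖⁻¹ * ‖S x - (r : ℂ) • x‖) * ‖x‖ :=
            mul_le_mul_of_nonneg_right h3 (norm_nonneg x)
        _ = ‖S x - (r : ℂ) • x‖ := by field_simp
  have halip : AntilipschitzWith (ε⁻¹).toNNReal A := by
    apply A.antilipschitz_of_bound
    intro x
    rw [Real.coe_toNNReal _ (le_of_lt (inv_pos.mpr hε))]
    calc ‖x‖ = ε⁻¹ * (ε * ‖x‖) := by field_simp
      _ ≤ ε⁻¹ * ‖A x‖ := mul_le_mul_of_nonneg_left (hAb x) (inv_nonneg.mpr hε.le)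
  have hinj : Function.Injective A := halip.injective
  have hclosedr : IsClosed (Set.range A) := halip.isClosed_range A.uniformContinuous
  have hclosed : IsClosed ((A.range : Submodule ℂ E) : Set E) := by
    have hre : ((A.range : Submodule ℂ E) : Set E) = Set.range A := by
      ext y; simp [LinearMap.mem_range]
    rw [hre]; exact hclosedr
  haveI : CompleteSpace (A.range : Submodule ℂ E) := hclosed.completeSpace_coe
  have hortho : (A.range)ᗮ = ⊥ := by
    rw [Submodule.eq_bot_iff]
    intro y hy
    have h1 : ∀ x : E, (inner ℂ (A x) y : ℂ) = 0 := fun x =>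
      (Submodule.mem_orthogonal _ y).mp hy (A x) (LinearMap.mem_range_self _ x)
    have h2 : (inner ℂ (A y) (A y) : ℂ) = 0 := by
      have h3 : (inner ℂ ((A (A y)) : E) y : ℂ) = 0 := h1 (A y)
      have h4 : (inner ℂ (A (A y)) y : ℂ) = inner ℂ (A y) (A y) := by
        nth_rewrite 1 [← hAadj]
        exact ContinuousLinearMap.adjoint_inner_left A y (A y)
      rw [h4] at h3; exact h3
    have h5 : A y = 0 := inner_self_eq_zero.mp h2
    exact hinj (by rw [h5, map_zero] : A y = A 0)
  have hrange : A.range = ⊤ := Submodule.orthogonal_eq_bot_iff.mp hortho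
  have hkerbot : A.ker = ⊥ := LinearMap.ker_eq_bot.mpr hinj
  let e := ContinuousLinearEquiv.ofBijective A hkerbot hrange
  have hecoe : ∀ x : E, e x = A x := fun x => by
    rw [← ContinuousLinearEquiv.coe_ofBijective A hkerbot hrange]; rfl
  have hAunit : IsUnit A := by
    refine ⟨⟨A, (e.symm : E →L[ℂ] E), ?_, ?_⟩, rfl⟩
    · ext x
      rw [ContinuousLinearMap.mul_apply, ContinuousLinearMap.one_apply]
      show A (e.symm x) = x
      rw [← hecoe]
      exact e.apply_symm_apply x
    · ext x
      rw [ContinuousLinearMap.mul_apply, ContinuousLinearMap.one_apply]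
      show e.symm (A x) = x
      rw [← hecoe]
      exact e.symm_apply_apply x
  have hnu : ¬ IsUnit ((algebraMap ℂ (E →L[ℂ] E)) (r : ℂ) - S) := spectrum.mem_iff.mp hr
  apply hnu
  have hform : (algebraMap ℂ (E →L[ℂ] E)) (r : ℂ) - S = -A := by
    rw [hA, Algebra.algebraMap_eq_smul_one, neg_sub]
  rw [hform]
  exact hAunit.neg


lemma ext_spec_subset (tmul : H →ₗ[ℂ] K →ₗ[ℂ] W)
    (hinner : ∀ (h h' : H) (k k' : K),
      (inner ℂ (tmul h k) (tmul h' k') : ℂ) = (inner ℂ h h' : ℂ) * (inner ℂ k k' : ℂ))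
    (hdense : Dense (Submodule.span ℂ (Set.range fun p : H × K => tmul p.1 p.2) : Set W))
    {A : H →L[ℂ] H} {A' : W →L[ℂ] W}
    (hA' : ∀ h k, A' (tmul h k) = tmul (A h) k) :
    spectrum ℂ A' ⊆ spectrum ℂ A := by
  intro z hz
  by_contra hzA
  rw [spectrum.mem_iff, not_not] at hzA
  obtain ⟨w, hw⟩ := hzA
  obtain ⟨R', hR'⟩ := ext_exists tmul hinner hdense (↑w⁻¹ : H →L[ℂ] H)
  have key : ∀ (B : H →L[ℂ] H) (B' : W →L[ℂ] W), (∀ h k, B' (tmul h k) = tmul (B h) k) →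
      ∀ (h : H) (k : K), (algebraMap ℂ (W →L[ℂ] W) z - A') (B' (tmul h k))
        = tmul (((algebraMap ℂ (H →L[ℂ] H) z - A) * B) h) k := by
    intro B B' hB' h k
    rw [hB', ContinuousLinearMap.sub_apply, hA', Algebra.algebraMap_eq_smul_one,
      Algebra.algebraMap_eq_smul_one]
    simp only [ContinuousLinearMap.smul_apply, ContinuousLinearMap.one_apply,
      ContinuousLinearMap.mul_apply, ContinuousLinearMap.sub_apply]
    rw [map_sub, LinearMap.sub_apply, map_smul, LinearMap.smul_apply]
  have h1 : (algebraMap ℂ (W →L[ℂ] W) z - A') * R' = 1 := by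
    apply ext_unique tmul hdense
    intro h k
    rw [ContinuousLinearMap.mul_apply, key _ _ hR', ContinuousLinearMap.one_apply]
    rw [← hw, Units.mul_inv]
    simp
  have h2 : R' * (algebraMap ℂ (W →L[ℂ] W) z - A') = 1 := by
    apply ext_unique tmul hdense
    intro h k
    have h3 : (algebraMap ℂ (W →L[ℂ] W) z - A') (tmul h k)
        = tmul ((algebraMap ℂ (H →L[ℂ] H) z - A) h) k := by
      rw [ContinuousLinearMap.sub_apply, hA', Algebra.algebraMap_eq_smul_one,
        Algebra.algebraMap_eq_smul_one]
      simp only [ContinuousLinearMap.smul_apply, ContinuousLinearMap.one_apply,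
        ContinuousLinearMap.sub_apply]
      rw [map_sub, LinearMap.sub_apply, map_smul, LinearMap.smul_apply]
    rw [ContinuousLinearMap.mul_apply, h3, hR', ContinuousLinearMap.one_apply,
      ← ContinuousLinearMap.mul_apply (↑w⁻¹ : H →L[ℂ] H), ← hw, Units.inv_mul]
    simp
  have : IsUnit (algebraMap ℂ (W →L[ℂ] W) z - A') :=
    ⟨⟨algebraMap ℂ (W →L[ℂ] W) z - A', R', h1, h2⟩, rfl⟩
  exact spectrum.mem_iff.mp hz this

end SpectrumTensorAux



open SpectrumTensorAux in
/-- Let `S`, `T` be positive invertible bounded operators on complex Hilbert spaces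
`H`, `K`.  On the Hilbert-space tensor product `W` of `H` and `K` (axiomatized by a
bilinear map `tmul` with the tensor inner-product identity and dense span), the
tensor-product operator `U = S ⊗ T` has spectrum the closure of
`{ s * t : s ∈ Sp S, t ∈ Sp T }`. -/
theorem spectrum_tensor_product_operator
    {H K W : Type*}
    [NormedAddCommGroup H] [InnerProductSpace ℂ H] [CompleteSpace H]
    [NormedAddCommGroup K] [InnerProductSpace ℂ K] [CompleteSpace K]
    [NormedAddCommGroup W] [InnerProductSpace ℂ W] [CompleteSpace W]
    (tmul : H →ₗ[ℂ] K →ₗ[ℂ] W)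
    (hinner : ∀ (h h' : H) (k k' : K),
      (inner ℂ (tmul h k) (tmul h' k') : ℂ) = (inner ℂ h h' : ℂ) * (inner ℂ k k' : ℂ))
    (hdense : Dense (Submodule.span ℂ (Set.range fun p : H × K => tmul p.1 p.2) : Set W))
    (S : H →L[ℂ] H) (T : K →L[ℂ] K)
    (hS : IsSelfAdjoint S) (hT : IsSelfAdjoint T)
    (hSpos : ∀ z ∈ spectrum ℂ S, ∃ r : ℝ, 0 < r ∧ z = (r : ℂ))
    (hTpos : ∀ z ∈ spectrum ℂ T, ∃ r : ℝ, 0 < r ∧ z = (r : ℂ))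
    (U : W →L[ℂ] W) (hU : ∀ (h : H) (k : K), U (tmul h k) = tmul (S h) (T k)) :
    spectrum ℂ U = closure (Set.image2 (· * ·) (spectrum ℂ S) (spectrum ℂ T)) := by

  classical
  have hinner' : ∀ (k k' : K) (h h' : H),
      (inner ℂ ((tmul.flip) k h) ((tmul.flip) k' h') : ℂ)
        = (inner ℂ k k' : ℂ) * (inner ℂ h h' : ℂ) := by
    intro k k' h h'
    rw [LinearMap.flip_apply, LinearMap.flip_apply, hinner]
    ring
  have hrange_eq : (Set.range fun p : K × H => tmul.flip p.1 p.2)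
      = (Set.range fun p : H × K => tmul p.1 p.2) := by
    ext x
    constructor
    · rintro ⟨p, rfl⟩; exact ⟨(p.2, p.1), rfl⟩
    · rintro ⟨p, rfl⟩; exact ⟨(p.2, p.1), rfl⟩
  have hdense' : Dense
      (Submodule.span ℂ (Set.range fun p : K × H => tmul.flip p.1 p.2) : Set W) := by
    rw [hrange_eq]; exact hdense
  obtain ⟨V, hV⟩ := ext_exists tmul hinner hdense S
  obtain ⟨T', hT'0⟩ := ext_exists tmul.flip hinner' hdense' T
  have hT' : ∀ (h : H) (k : K), T' (tmul h k) = tmul h (T k) := fun h k => hT'0 k h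
  have uniq : ∀ {B C : W →L[ℂ] W}, (∀ h k, B (tmul h k) = C (tmul h k)) → B = C :=
    fun {B C} hBC => ext_unique tmul hdense hBC
  have hUVT : U = V * T' := by
    apply uniq; intro h k
    rw [hU, ContinuousLinearMap.mul_apply, hT', hV]
  have hcommVT : V * T' = T' * V := by
    apply uniq; intro h k
    rw [ContinuousLinearMap.mul_apply, ContinuousLinearMap.mul_apply, hT', hV, hV, hT']
  have hinnerS : ∀ (a b : H), (inner ℂ (S a) b : ℂ) = inner ℂ a (S b) := by
    intro a b
    conv_lhs => rw [← hS.adjoint_eq]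
    exact ContinuousLinearMap.adjoint_inner_left S b a
  have hinnerT : ∀ (a b : K), (inner ℂ (T a) b : ℂ) = inner ℂ a (T b) := by
    intro a b
    conv_lhs => rw [← hT.adjoint_eq]
    exact ContinuousLinearMap.adjoint_inner_left T b a
  have hVii := ext_inner_all tmul hdense (B := V) (C := V) (by
    intro a a' b b'
    rw [hV, hV, hinner, hinner, hinnerS a a'])
  have hVsa : IsSelfAdjoint V := by
    rw [ContinuousLinearMap.isSelfAdjoint_iff']
    exact ((ContinuousLinearMap.eq_adjoint_iff V V).mpr hVii).symm
  have hT'ii := ext_inner_all tmul hdense (B := T') (C := T') (by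
    intro a a' b b'
    rw [hT', hT', hinner, hinner, hinnerT b b'])
  have hT'sa : IsSelfAdjoint T' := by
    rw [ContinuousLinearMap.isSelfAdjoint_iff']
    exact ((ContinuousLinearMap.eq_adjoint_iff T' T').mpr hT'ii).symm
  have hspecV : spectrum ℂ V ⊆ spectrum ℂ S := ext_spec_subset tmul hinner hdense hV
  have hspecT' : spectrum ℂ T' ⊆ spectrum ℂ T :=
    ext_spec_subset tmul.flip hinner' hdense' hT'0
  apply Set.eq_of_subset_of_subset
  · -- forward inclusion
    intro z hz
    apply subset_closure
    set 𝒜 := StarAlgebra.adjoin ℂ ({V, T'} : Set (W →L[ℂ] W)) with h𝒜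
    have hVs : star V = V := hVsa
    have hT's : star T' = T' := hT'sa
    have hgen : ∀ a ∈ ({V, T'} : Set (W →L[ℂ] W)), ∀ b ∈ ({V, T'} : Set (W →L[ℂ] W)),
        a * b = b * a := by
      intro a ha b hb
      simp only [Set.mem_insert_iff, Set.mem_singleton_iff] at ha hb
      rcases ha with rfl | rfl <;> rcases hb with rfl | rfl
      · rfl
      · exact hcommVT
      · exact hcommVT.symm
      · rfl
    have hgens : ∀ a ∈ ({V, T'} : Set (W →L[ℂ] W)), ∀ b ∈ ({V, T'} : Set (W →L[ℂ] W)),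
        a * star b = star b * a := by
      intro a ha b hb
      have hb' : star b ∈ ({V, T'} : Set (W →L[ℂ] W)) := by
        simp only [Set.mem_insert_iff, Set.mem_singleton_iff] at hb ⊢
        rcases hb with rfl | rfl
        · left; exact hVs
        · right; exact hT's
      exact hgen a ha (star b) hb'
    set B := 𝒜.topologicalClosure with hB
    haveI hBclosed : IsClosed (B : Set (W →L[ℂ] W)) :=
      StarSubalgebra.isClosed_topologicalClosure 𝒜
    haveI : CompleteSpace B := hBclosed.completeSpace_coe
    have hc𝒜 : ∀ x y : 𝒜, x * y = y * x :=
      (StarAlgebra.adjoinCommSemiringOfComm ℂ hgen hgens).mul_comm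
    have hcommB : ∀ x y : B, x * y = y * x :=
      (𝒜.commRingTopologicalClosure hc𝒜).mul_comm
    letI : NormedCommRing B := { (inferInstance : NormedRing B) with mul_comm := hcommB }
    have hVB : V ∈ B :=
      𝒜.le_topologicalClosure (StarAlgebra.subset_adjoin ℂ _ (by simp))
    have hT'B : T' ∈ B :=
      𝒜.le_topologicalClosure (StarAlgebra.subset_adjoin ℂ _ (by simp))
    have hUB : U ∈ B := by rw [hUVT]; exact mul_mem hVB hT'B
    have hfactor : (⟨U, hUB⟩ : B) = ⟨V, hVB⟩ * ⟨T', hT'B⟩ := Subtype.ext hUVT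
    have hzB : z ∈ spectrum ℂ ((⟨U, hUB⟩ : B)) := by
      rw [StarSubalgebra.spectrum_eq B]
      exact hz
    obtain ⟨φ, hφ⟩ := WeakDual.CharacterSpace.mem_spectrum_iff_exists.mp hzB
    have hV1 : φ ⟨V, hVB⟩ ∈ spectrum ℂ V := by
      have h7 := AlgHom.apply_mem_spectrum φ (⟨V, hVB⟩ : B)
      rwa [StarSubalgebra.spectrum_eq B] at h7
    have hT1 : φ ⟨T', hT'B⟩ ∈ spectrum ℂ T' := by
      have h7 := AlgHom.apply_mem_spectrum φ (⟨T', hT'B⟩ : B)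
      rwa [StarSubalgebra.spectrum_eq B] at h7
    refine ⟨φ ⟨V, hVB⟩, hspecV hV1, φ ⟨T', hT'B⟩, hspecT' hT1, ?_⟩
    show φ ⟨V, hVB⟩ * φ ⟨T', hT'B⟩ = z
    rw [← hφ, hfactor, map_mul]
  · -- reverse inclusion
    rw [IsClosed.closure_subset_iff (spectrum.isClosed (𝕜 := ℂ) U)]
    rintro z hz
    rw [Set.mem_image2] at hz
    obtain ⟨sv, hsv, tv, htv, rfl⟩ := hz
    obtain ⟨r, hrpos, rfl⟩ := hSpos sv hsv
    obtain ⟨q, hqpos, rfl⟩ := hTpos tv htv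
    by_contra hzmem
    rw [spectrum.mem_iff, not_not] at hzmem
    obtain ⟨w, hw⟩ := hzmem
    set c := ‖((w⁻¹ : (W →L[ℂ] W)ˣ) : W →L[ℂ] W)‖ with hc
    have hcnn : (0:ℝ) ≤ c := norm_nonneg _
    set M := ‖T‖ + r with hM
    have hMpos : 0 < M := add_pos_of_nonneg_of_pos (norm_nonneg T) hrpos
    set ε := ((c + 1) * (M + 1))⁻¹ with hε
    clear_value c M ε
    have hεpos : 0 < ε := by
      rw [hε]
      exact inv_pos.mpr (mul_pos (by linarith) (by linarith))
    obtain ⟨h, hh1, hhS⟩ := approx_eigen S hS hsv hεpos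
    obtain ⟨k, hk1, hkT⟩ := approx_eigen T hT htv hεpos
    have hx1 : ‖tmul h k‖ = 1 := by
      rw [tensor_norm tmul hinner, hh1, hk1, mul_one]
    have hTk : ‖T k‖ ≤ ‖T‖ := by
      have h9 := T.le_opNorm k; rwa [hk1, mul_one] at h9
    have hid : U (tmul h k) - ((r : ℂ) * (q : ℂ)) • (tmul h k)
        = tmul (S h - (r:ℂ) • h) (T k) + (r:ℂ) • tmul h (T k - (q:ℂ) • k) := by
      rw [hU, map_sub, LinearMap.sub_apply, map_smul, LinearMap.smul_apply,
        map_sub (tmul h), map_smul (tmul h), smul_sub, smul_smul]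
      abel
    have hest : ‖U (tmul h k) - ((r:ℂ)*(q:ℂ)) • (tmul h k)‖ ≤ ε * M := by
      rw [hid]
      have e1 : ‖tmul (S h - (r:ℂ) • h) (T k)‖ ≤ ε * ‖T‖ := by
        rw [tensor_norm tmul hinner]
        exact mul_le_mul (le_of_lt hhS) hTk (norm_nonneg _) (le_of_lt hεpos)
      have e2 : ‖(r:ℂ) • tmul h (T k - (q:ℂ) • k)‖ ≤ r * ε := by
        rw [norm_smul, tensor_norm tmul hinner, hh1, one_mul]
        have : ‖((r:ℝ) : ℂ)‖ = r := by
          rw [Complex.norm_real, Real.norm_eq_abs, abs_of_pos hrpos]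
        rw [this]
        exact mul_le_mul_of_nonneg_left (le_of_lt hkT) (le_of_lt hrpos)
      calc ‖tmul (S h - (r:ℂ) • h) (T k) + (r:ℂ) • tmul h (T k - (q:ℂ) • k)‖
          ≤ ‖tmul (S h - (r:ℂ) • h) (T k)‖ + ‖(r:ℂ) • tmul h (T k - (q:ℂ) • k)‖ :=
            norm_add_le _ _
        _ ≤ ε * ‖T‖ + r * ε := add_le_add e1 e2
        _ = ε * M := by rw [hM]; ring
    have hxeq : tmul h k = ((w⁻¹ : (W →L[ℂ] W)ˣ) : W →L[ℂ] W)
        ((algebraMap ℂ (W →L[ℂ] W) ((r:ℂ)*(q:ℂ)) - U) (tmul h k)) := by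
      have h10 : (((w⁻¹ : (W →L[ℂ] W)ˣ) : W →L[ℂ] W) * ((w : (W →L[ℂ] W)ˣ) : W →L[ℂ] W))
          (tmul h k) = tmul h k := by
        rw [Units.inv_mul]; simp
      rw [hw] at h10
      calc tmul h k
          = ((((w⁻¹ : (W →L[ℂ] W)ˣ) : W →L[ℂ] W))
              * (algebraMap ℂ (W →L[ℂ] W) ((r:ℂ)*(q:ℂ)) - U)) (tmul h k) := h10.symm
        _ = ((w⁻¹ : (W →L[ℂ] W)ˣ) : W →L[ℂ] W)
            ((algebraMap ℂ (W →L[ℂ] W) ((r:ℂ)*(q:ℂ)) - U) (tmul h k)) := rfl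
    have h8 : ‖(algebraMap ℂ (W →L[ℂ] W) ((r:ℂ)*(q:ℂ)) - U) (tmul h k)‖ ≤ ε * M := by
      have h11 : (algebraMap ℂ (W →L[ℂ] W) ((r:ℂ)*(q:ℂ)) - U) (tmul h k)
          = ((r:ℂ)*(q:ℂ)) • (tmul h k) - U (tmul h k) := by
        rw [ContinuousLinearMap.sub_apply, Algebra.algebraMap_eq_smul_one,
          ContinuousLinearMap.smul_apply, ContinuousLinearMap.one_apply]
      rw [h11, ← neg_sub, norm_neg]
      exact hest
    have hfinal : (1:ℝ) ≤ c * (ε * M) := by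
      calc (1:ℝ) = ‖tmul h k‖ := hx1.symm
        _ = ‖((w⁻¹ : (W →L[ℂ] W)ˣ) : W →L[ℂ] W)
            ((algebraMap ℂ (W →L[ℂ] W) ((r:ℂ)*(q:ℂ)) - U) (tmul h k))‖ := by
              rw [← hxeq]
        _ ≤ c * ‖(algebraMap ℂ (W →L[ℂ] W) ((r:ℂ)*(q:ℂ)) - U) (tmul h k)‖ := by
              rw [hc]; exact ContinuousLinearMap.le_opNorm _ _
        _ ≤ c * (ε * M) := mul_le_mul_of_nonneg_left h8 hcnn
    have hprod : (0:ℝ) < (c + 1) * (M + 1) := mul_pos (by linarith) (by linarith)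
    have hεeq : ε * ((c + 1) * (M + 1)) = 1 := by
      rw [hε]; exact inv_mul_cancel₀ (ne_of_gt hprod)
    exact arith_contra hcnn hMpos hεpos hεeq hfinal
end

section
/- Let δ be a positive invertible element of a unital C*-algebra A such that there exist a unital *-homomorphism Δ : A → A ⊗ A with Δ(δ) = δ ⊗ δ and a unital *-antihomomorphism R : A → A with R(δ) = δ⁻¹. If moreover Sp(δ⊗δ) = closure{st : s,t ∈ Sp(δ)} and Sp(δ) ⊆ Sp of images under Δ and R as usual, then the spectrum Sp(δ) ⊆ (0,∞) is a closed subgroup of the multiplicative group of positive reals. -/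
/-- Let `δ` be a positive invertible element of a unital C*-algebra `A`, `Δ : A → B`
(think `B = A ⊗ A`) a unital *-homomorphism with `Δ δ = δ ⊗ δ`, whose spectrum is the
closure of the set of products of spectral values of `δ`, and `R : A → A` a unital
*-antihomomorphism with `R δ = δ⁻¹`.  Then `Sp δ ⊆ (0, ∞)` is a closed subgroup of the
multiplicative group of positive reals: it is topologically closed, contains `1`, and is
closed under multiplication and inversion. -/
theorem spectrum_group_like_is_closed_subgroup
    {A B : Type*}
    [NormedRing A] [NormedAlgebra ℂ A] [CompleteSpace A] [StarRing A] [CStarRing A]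
    [Nontrivial A]
    [NormedRing B] [NormedAlgebra ℂ B] [CompleteSpace B] [StarRing B] [CStarRing B]
    (δ : A) (hsa : IsSelfAdjoint δ)
    (hpos : ∀ z ∈ spectrum ℂ δ, ∃ r : ℝ, 0 < r ∧ z = (r : ℂ))
    (hu : IsUnit δ)
    (Δ : A →⋆ₐ[ℂ] B)
    (hΔspec : spectrum ℂ (Δ δ) =
      closure (Set.image2 (· * ·) (spectrum ℂ δ) (spectrum ℂ δ)))
    (R : A → A) (hR1 : R 1 = 1)
    (hRadd : ∀ a b : A, R (a + b) = R a + R b)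
    (hRmul : ∀ a b : A, R (a * b) = R b * R a)
    (hRsmul : ∀ (c : ℂ) (a : A), R (c • a) = c • R a)
    (hRstar : ∀ a : A, R (star a) = star (R a))
    (hRδ : R δ = ↑hu.unit⁻¹) :
    (∀ z ∈ spectrum ℂ δ, ∃ r : ℝ, 0 < r ∧ z = (r : ℂ)) ∧
    IsClosed (spectrum ℂ δ) ∧
    (1 : ℂ) ∈ spectrum ℂ δ ∧
    (∀ s t : ℂ, s ∈ spectrum ℂ δ → t ∈ spectrum ℂ δ → s * t ∈ spectrum ℂ δ) ∧
    (∀ s : ℂ, s ∈ spectrum ℂ δ → s⁻¹ ∈ spectrum ℂ δ) := by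
  -- Spectrum of R a is contained in spectrum of a
  have hRspec : ∀ a : A, spectrum ℂ (R a) ⊆ spectrum ℂ a := by
    intro a z hz
    by_contra h
    rw [spectrum.notMem_iff] at h
    apply spectrum.notMem_iff.mpr _ hz
    obtain ⟨u, hu'⟩ := h
    refine ⟨⟨R u.val, R u.inv, ?_, ?_⟩, ?_⟩
    · rw [← hRmul, u.inv_val, hR1]
    · rw [← hRmul, u.val_inv, hR1]
    · show R u.val = _
      rw [hu']
      have : algebraMap ℂ A z = z • (1 : A) := by
        rw [Algebra.algebraMap_eq_smul_one]
      rw [this, sub_eq_add_neg, hRadd, hRsmul, hR1]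
      have : -a = (-1 : ℂ) • a := by simp
      rw [this, hRsmul]
      simp [sub_eq_add_neg]
  have hmul : ∀ s t : ℂ, s ∈ spectrum ℂ δ → t ∈ spectrum ℂ δ → s * t ∈ spectrum ℂ δ := by
    intro s t hs ht
    have h1 : s * t ∈ spectrum ℂ (Δ δ) := by
      rw [hΔspec]
      exact subset_closure (Set.mem_image2_of_mem hs ht)
    exact AlgHom.spectrum_apply_subset Δ.toAlgHom δ h1
  have hinv : ∀ s : ℂ, s ∈ spectrum ℂ δ → s⁻¹ ∈ spectrum ℂ δ := by
    intro s hs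
    obtain ⟨r, hr, rfl⟩ := hpos s hs
    have hs0 : (r : ℂ) ≠ 0 := by exact_mod_cast hr.ne'
    have hδu : (hu.unit : A) = δ := rfl
    have : ((Units.mk0 (r : ℂ) hs0 : ℂˣ) : ℂ) ∈ spectrum ℂ (hu.unit : A) := by
      rwa [hδu]
    have h2 := spectrum.inv_mem_iff.mp this
    have h3 : ((r : ℂ))⁻¹ ∈ spectrum ℂ ((hu.unit⁻¹ : Aˣ) : A) := by
      simpa using h2
    rw [← hRδ] at h3
    exact hRspec δ h3
  have hne : (spectrum ℂ δ).Nonempty := spectrum.nonempty δ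
  obtain ⟨s, hs⟩ := hne
  have hs0 : s ≠ 0 := by
    obtain ⟨r, hr, rfl⟩ := hpos s hs
    exact_mod_cast hr.ne'
  have h1 : (1 : ℂ) ∈ spectrum ℂ δ := by
    have := hmul s s⁻¹ hs (hinv s hs)
    rwa [mul_inv_cancel₀ hs0] at this
  exact ⟨hpos, spectrum.isClosed δ, h1, hmul, hinv⟩
end
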